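/- arXiv:math/9906057 — 5 statements merged into one kernel-verified Lean document; each statement's English description precedes it below -/
import Mathlib

section
/- Let a ≥ 1 be an integer and define the entire function ϖ : ℂ → ℂ by ϖ(z) := (sin z)^a. Then for every integer k ≥ 1 the iterates ϖ, ϖ∘ϖ, …, ϖ^{∘k} are algebraically independent over the field of rational functions ℂ(z): there is no nonzero polynomial P ∈ ℂ[z, x₁,…,x_k] such that P(z, ϖ(z), ϖ^{∘2}(z), …, ϖ^{∘k}(z)) = 0 for all z ∈ ℂ. -/
open MvPolynomial Complex

lemma sinpow_fiber_infinite (a : ℕ) (ha : 1 ≤ a) (w : ℂ) :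
    {z : ℂ | Complex.sin z ^ a = w}.Infinite := by
  obtain ⟨c, hc⟩ := IsAlgClosed.exists_pow_nat_eq (k := ℂ) w (n := a) (by omega)
  obtain ⟨z₀, hz₀⟩ := Complex.sin_surjective c
  apply Set.infinite_of_injective_forall_mem
    (f := fun n : ℤ => z₀ + n * (2 * Real.pi : ℂ))
  · intro m n hmn
    have h2 : (2 * (Real.pi : ℂ)) ≠ 0 := by
      simp [Real.pi_ne_zero, Complex.ofReal_ne_zero]
    simp only [add_right_inj] at hmn
    have := mul_right_cancel₀ h2 hmn
    exact_mod_cast this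
  · intro n
    simp only [Set.mem_setOf_eq]
    rw [show z₀ + (n : ℂ) * (2 * (Real.pi : ℂ)) = z₀ + n * (2 * Real.pi) by push_cast; ring]
    rw [Complex.sin_add_int_mul_two_pi, hz₀, hc]

lemma aux (a : ℕ) (ha : 1 ≤ a) : ∀ (k : ℕ) (P : MvPolynomial (Fin (k + 1)) ℂ),
    (∀ z : ℂ, MvPolynomial.eval
      (Fin.cons z fun i : Fin k => (fun w => Complex.sin w ^ a)^[(i : ℕ) + 1] z) P = 0) →
    P = 0 := by
  intro k
  induction k with
  | zero =>
    intro P hP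
    have key : Polynomial.map (eval (fun i : Fin 0 => (0:ℂ))) (finSuccEquiv ℂ 0 P) = 0 := by
      apply Polynomial.eq_zero_of_infinite_isRoot
      apply Set.infinite_of_injective_forall_mem (f := fun z : ℂ => z) (fun x y h => h)
      intro z
      have h1 := hP z
      rw [eval_eq_eval_mv_eval'] at h1
      have hv : (fun i : Fin 0 => (fun w => Complex.sin w ^ a)^[(i:ℕ)+1] z)
          = (fun _ : Fin 0 => (0:ℂ)) := funext fun i => i.elim0
      rw [hv] at h1
      exact h1
    have hinj : Function.Injective (Polynomial.map (eval (fun i : Fin 0 => (0:ℂ)))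
        : Polynomial (MvPolynomial (Fin 0) ℂ) → Polynomial ℂ) := by
      apply Polynomial.map_injective
      intro p q hpq
      obtain ⟨x, rfl⟩ := MvPolynomial.C_surjective (Fin 0) p
      obtain ⟨y, rfl⟩ := MvPolynomial.C_surjective (Fin 0) q
      simp only [eval_C] at hpq
      rw [hpq]
    have : finSuccEquiv ℂ 0 P = 0 := hinj (by simpa using key)
    exact (map_eq_zero_iff _ (finSuccEquiv ℂ 0).injective).mp this
  | succ n ih =>
    intro P hP
    set ϖ : ℂ → ℂ := fun w => Complex.sin w ^ a with hϖ
    -- For each w, the polynomial in z obtained by plugging in iterates of w vanishes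
    have key : ∀ w : ℂ,
        Polynomial.map (eval (Fin.cons w fun i : Fin n => ϖ^[(i:ℕ)+1] w))
          (finSuccEquiv ℂ (n+1) P) = 0 := by
      intro w
      apply Polynomial.eq_zero_of_infinite_isRoot
      have hfib := sinpow_fiber_infinite a ha w
      apply Set.Infinite.mono _ hfib
      intro z hz
      simp only [Set.mem_setOf_eq] at hz ⊢
      have h1 := hP z
      rw [eval_eq_eval_mv_eval'] at h1
      have hz' : ϖ z = w := hz
      have hv : (fun i : Fin (n+1) => ϖ^[(i:ℕ)+1] z)
          = (Fin.cons w fun i : Fin n => ϖ^[(i:ℕ)+1] w) := by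
        funext i
        refine Fin.cases ?_ ?_ i
        · simpa [Function.iterate_succ_apply] using hz'
        · intro j
          simp only [Fin.cons_succ]
          rw [Function.iterate_succ_apply, hz']
          rfl
      rw [Polynomial.IsRoot]
      rw [hv] at h1
      exact h1
    -- hence each coefficient vanishes under eval at iterates of w, for all w
    have hcoeff : ∀ m : ℕ, (finSuccEquiv ℂ (n+1) P).coeff m = 0 := by
      intro m
      apply ih
      intro w
      have := key w
      have := congrArg (fun q => Polynomial.coeff q m) this
      simpa using this
    have : finSuccEquiv ℂ (n+1) P = 0 := Polynomial.ext fun m => by simp [hcoeff m]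
    exact (map_eq_zero_iff _ (finSuccEquiv ℂ (n+1)).injective).mp this

/-- For `ϖ(z) = (sin z)^a` with `a ≥ 1`, the iterates
`ϖ, ϖ∘ϖ, …, ϖ^{∘k}` are algebraically independent over `ℂ(z)`: any polynomial
`P ∈ ℂ[z, x₁, …, x_k]` with `P(z, ϖ(z), …, ϖ^{∘k}(z)) = 0` for all `z ∈ ℂ`
is the zero polynomial. -/
theorem iterates_of_sin_pow_algebraically_independent
    (a : ℕ) (ha : 1 ≤ a) (k : ℕ) (hk : 1 ≤ k)
    (P : MvPolynomial (Fin (k + 1)) ℂ)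
    (hP : ∀ z : ℂ,
      MvPolynomial.eval
        (Fin.cons z fun i : Fin k => (fun w => Complex.sin w ^ a)^[(i : ℕ) + 1] z) P = 0) :
    P = 0 := aux a ha k P hP
end

section
/- Let a, b ≥ 1 be integers, let S = Δ^a ⊆ ℂ^a and T = Δ^b ⊆ ℂ^b be the open unit polydiscs, and let g : S × T → ℂ be holomorphic. Assume that for every t ∈ T the holomorphic function S ∋ s ↦ g(s,t) is algebraic. Then there exist integers N, A ≥ 1 and a nonempty open subset T₁ ⊆ T such that the set of those t ∈ T₁ for which there exists a nonzero polynomial P ∈ ℂ[X, s₁,…,s_a] of degree at most N in X and total degree at most A in (s₁,…,s_a) with P(g(s,t), s) = 0 for all s ∈ S, is dense in T₁. -/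
noncomputable section

/-- The open unit polydisc `Δ^ι ⊆ ℂ^ι`. -/
def polydisc (ι : Type*) : Set (ι → ℂ) := {z | ∀ i, ‖z i‖ < 1}

/-- A function `h` is algebraic on `Ω ⊆ ℂ^ι` if there is a nonzero polynomial
`P ∈ ℂ[X, (z_i)_{i ∈ ι}]` with `P(h z, z) = 0` for all `z ∈ Ω`. -/
def AlgebraicOn {ι : Type*} (Ω : Set (ι → ℂ)) (h : (ι → ℂ) → ℂ) : Prop :=
  ∃ P : MvPolynomial (Option ι) ℂ, P ≠ 0 ∧
    ∀ z ∈ Ω, MvPolynomial.eval (fun v => v.elim (h z) z) P = 0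

/-!
Sort the parameters `t ∈ Δ^b` by the degrees `(N, A)` of an annihilating polynomial of
`s ↦ g(s, t)`. By hypothesis these countably many sets cover the open polydisc, which is a
Baire space, so the closure of one of them has nonempty interior `T₁`; enlarging `N` and `A`
to be at least `1` only enlarges that set.
-/

open MvPolynomial Set

theorem isOpen_polydisc (ι : Type*) [Finite ι] : IsOpen (polydisc ι) := by
  simp only [polydisc, ofPred_forall]
  exact isOpen_iInter_of_finite fun i => isOpen_lt (continuous_apply i).norm continuous_const

theorem zero_mem_polydisc (ι : Type*) : (0 : ι → ℂ) ∈ polydisc ι := by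
  simp [polydisc]

theorem exists_isOpen_subset_closure_inter_of_subset_iUnion {X ι : Type*} [TopologicalSpace X]
    [Countable ι] {U : Set X} [BaireSpace U] (hU : IsOpen U) (hne : U.Nonempty)
    {E : ι → Set X} (hcover : U ⊆ ⋃ i, E i) :
    ∃ i, ∃ V, IsOpen V ∧ V.Nonempty ∧ V ⊆ U ∧ V ⊆ closure (V ∩ E i) := by
  have : Nonempty U := hne.to_subtype
  have hunion : ⋃ i, closure (((↑) : U → X) ⁻¹' E i) = univ :=
    eq_univ_of_forall fun x =>
      mem_iUnion.2 ((mem_iUnion.1 (hcover x.2)).imp fun _ hx => subset_closure hx)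
  obtain ⟨i, hi⟩ := nonempty_interior_of_iUnion_of_closed (fun _ => isClosed_closure) hunion
  set V := ((↑) : U → X) '' interior (closure (((↑) : U → X) ⁻¹' E i))
  have hVopen : IsOpen V := hU.isOpenMap_subtype_val _ isOpen_interior
  have hVE : V ⊆ closure (E i) :=
    calc V ⊆ (↑) '' closure (((↑) : U → X) ⁻¹' E i) := image_mono interior_subset
      _ ⊆ closure ((↑) '' (((↑) : U → X) ⁻¹' E i)) :=
        image_closure_subset_closure_image continuous_subtype_val
      _ ⊆ closure (E i) := closure_mono (image_preimage_subset _ _)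
  exact ⟨i, V, hVopen, hi.image _, Subtype.coe_image_subset _ _,
    fun x hx => hVopen.inter_closure ⟨hx, hVE hx⟩⟩

section Degree

variable {ι : Type*} [Fintype ι]

/-- `N` bounds the degree of `P` in the variable `none` (standing for `h z`), `A` its total
degree in the coordinates `z`. -/
def AlgebraicOnWithDegree (Ω : Set (ι → ℂ)) (h : (ι → ℂ) → ℂ) (N A : ℕ) : Prop :=
  ∃ P : MvPolynomial (Option ι) ℂ, P ≠ 0 ∧ P.degreeOf none ≤ N ∧
    (∀ m ∈ P.support, ∑ j, m (some j) ≤ A) ∧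
    ∀ z ∈ Ω, MvPolynomial.eval (fun v => v.elim (h z) z) P = 0

theorem AlgebraicOnWithDegree.mono {Ω : Set (ι → ℂ)} {h : (ι → ℂ) → ℂ} {N A N' A' : ℕ}
    (hNA : AlgebraicOnWithDegree Ω h N A) (hN : N ≤ N') (hA : A ≤ A') :
    AlgebraicOnWithDegree Ω h N' A' :=
  let ⟨P, hP, hdeg, htot, hroot⟩ := hNA
  ⟨P, hP, hdeg.trans hN, fun m hm => (htot m hm).trans hA, hroot⟩

theorem sum_some_le_totalDegree {R : Type*} [CommSemiring R] {P : MvPolynomial (Option ι) R}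
    {m : Option ι →₀ ℕ} (hm : m ∈ P.support) : ∑ j, m (some j) ≤ P.totalDegree :=
  calc ∑ j, m (some j) ≤ m none + ∑ j, m (some j) := Nat.le_add_left _ _
    _ = m.sum fun _ e => e := by rw [Finsupp.sum_fintype _ _ (fun _ => rfl), Fintype.sum_option]
    _ ≤ P.totalDegree := le_totalDegree hm

theorem AlgebraicOn.exists_algebraicOnWithDegree {Ω : Set (ι → ℂ)} {h : (ι → ℂ) → ℂ}
    (halg : AlgebraicOn Ω h) : ∃ N A, AlgebraicOnWithDegree Ω h N A :=
  let ⟨P, hP, hroot⟩ := halg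
  ⟨P.degreeOf none, P.totalDegree, P, hP, le_rfl, fun _ => sum_some_le_totalDegree, hroot⟩

end Degree

theorem dense_set_of_uniformly_bounded_degree_general
    (a b : ℕ)
    (g : ((Fin a ⊕ Fin b) → ℂ) → ℂ)
    (halg : ∀ t ∈ polydisc (Fin b),
      AlgebraicOn (polydisc (Fin a)) fun s => g (Sum.elim s t)) :
    ∃ N A : ℕ, 1 ≤ N ∧ 1 ≤ A ∧
      ∃ T₁ : Set (Fin b → ℂ), T₁ ⊆ polydisc (Fin b) ∧ IsOpen T₁ ∧ T₁.Nonempty ∧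
        T₁ ⊆ closure {t : Fin b → ℂ | t ∈ T₁ ∧
          ∃ P : MvPolynomial (Option (Fin a)) ℂ, P ≠ 0 ∧
            MvPolynomial.degreeOf none P ≤ N ∧
            (∀ m ∈ P.support, (∑ j, m (some j)) ≤ A) ∧
            ∀ s ∈ polydisc (Fin a),
              MvPolynomial.eval (fun v => v.elim (g (Sum.elim s t)) s) P = 0} := by
  let E : ℕ × ℕ → Set (Fin b → ℂ) := fun p =>
    {t | AlgebraicOnWithDegree (polydisc (Fin a)) (fun s => g (Sum.elim s t)) p.1 p.2}
  have hcover : polydisc (Fin b) ⊆ ⋃ p, E p := fun t ht =>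
    let ⟨N, A, hNA⟩ := (halg t ht).exists_algebraicOnWithDegree
    mem_iUnion.2 ⟨(N, A), hNA⟩
  have : BaireSpace (polydisc (Fin b)) :=
    (isOpen_polydisc _).isGδ.baireSpace_of_t2Space_locallyCompactSpace
  obtain ⟨⟨N, A⟩, T₁, hopen, hne, hsub, hdense⟩ :=
    exists_isOpen_subset_closure_inter_of_subset_iUnion (isOpen_polydisc _)
      ⟨0, zero_mem_polydisc _⟩ hcover
  exact ⟨max 1 N, max 1 A, le_max_left _ _, le_max_left _ _, T₁, hsub, hopen, hne,
    hdense.trans <| closure_mono fun t ht =>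
      ⟨ht.1, ht.2.mono (le_max_right _ _) (le_max_right _ _)⟩⟩

/-- If `g` is holomorphic on `Δ^a × Δ^b` and algebraic in `s` for every
fixed `t ∈ Δ^b`, then there are degrees `N, A ≥ 1` and a nonempty open `T₁ ⊆ Δ^b` such
that the set of `t ∈ T₁` admitting a nonzero polynomial `P(X,s)` of degree `≤ N` in `X`
and total degree `≤ A` in `s` with `P(g(s,t), s) = 0` for all `s ∈ Δ^a` is dense in `T₁`. -/
theorem dense_set_of_uniformly_bounded_degree
    (a b : ℕ) (ha : 1 ≤ a) (hb : 1 ≤ b)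
    (g : ((Fin a ⊕ Fin b) → ℂ) → ℂ)
    (hg : DifferentiableOn ℂ g (polydisc (Fin a ⊕ Fin b)))
    (halg : ∀ t ∈ polydisc (Fin b),
      AlgebraicOn (polydisc (Fin a)) fun s => g (Sum.elim s t)) :
    ∃ N A : ℕ, 1 ≤ N ∧ 1 ≤ A ∧
      ∃ T₁ : Set (Fin b → ℂ), T₁ ⊆ polydisc (Fin b) ∧ IsOpen T₁ ∧ T₁.Nonempty ∧
        T₁ ⊆ closure {t : Fin b → ℂ | t ∈ T₁ ∧
          ∃ P : MvPolynomial (Option (Fin a)) ℂ, P ≠ 0 ∧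
            MvPolynomial.degreeOf none P ≤ N ∧
            (∀ m ∈ P.support, (∑ j, m (some j)) ≤ A) ∧
            ∀ s ∈ polydisc (Fin a),
              MvPolynomial.eval (fun v => v.elim (g (Sum.elim s t)) s) P = 0} :=
  dense_set_of_uniformly_bounded_degree_general a b g halg
end
end

section
/- Let a, b ≥ 1 be integers, let T ⊆ ℂ^b be open, let h₁,…,h_m : Δ^a × T → ℂ be holomorphic, and let t₁ ∈ T. If the holomorphic functions s ↦ h₁(s,t₁), …, s ↦ h_m(s,t₁) are linearly independent over ℂ, then there exists an open neighborhood T' ⊆ T of t₁ such that for every t ∈ T' the functions s ↦ h₁(s,t), …, s ↦ h_m(s,t) are linearly independent over ℂ. -/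
/-!
Linear independence of functions `f₁, …, f_m` on a set is witnessed by finitely many points
`s₁, …, s_m` at which the evaluation matrix `(f_k(s_i))` is invertible: the evaluation vectors
`(f_k(s))_k` span `ℂ^m`, since a functional vanishing on all of them is a linear relation among
the `f_k`. With these points fixed, the determinant of `(h_k(s_i, t))` depends continuously on
`t`, so it stays nonzero, and keeps witnessing independence, for `t` near `t₁`.
-/

open Topology

noncomputable section

section EvaluationMatrix

variable {K ι α : Type*} [Fintype ι]

theorem linearIndependent_restrict_iff_sum_mul_eq_zero [Ring K] {f : ι → α → K} {D : Set α} :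
    LinearIndependent K (fun k (s : D) => f k s) ↔
      ∀ d : ι → K, (∀ s ∈ D, ∑ k, d k * f k s = 0) → ∀ k, d k = 0 := by
  simp [Fintype.linearIndependent_iff, funext_iff, Finset.sum_apply]

theorem linearIndependent_of_det_evaluation_ne_zero [DecidableEq ι] [CommRing K] [IsDomain K]
    {f : ι → α → K} {s : ι → α} (hdet : (Matrix.of fun i k => f k (s i)).det ≠ 0) :
    LinearIndependent K f :=
  LinearIndependent.of_comp (LinearMap.funLeft K K s)
    (Matrix.linearIndependent_cols_of_det_ne_zero hdet)

variable [DecidableEq ι] [Field K]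

theorem span_range_evaluation_eq_top {f : ι → α → K} (hf : LinearIndependent K f) :
    Submodule.span K (Set.range fun s k => f k s) = ⊤ := by
  rw [← Submodule.dualAnnihilator_eq_bot_iff, eq_bot_iff]
  intro φ hφ
  rw [Submodule.mem_dualAnnihilator] at hφ
  have hφ_eval : ∀ s, ∑ k, φ (Pi.single k 1) * f k s = 0 := fun s => by
    have hs : φ (fun k => f k s) = 0 := hφ _ (Submodule.subset_span ⟨s, rfl⟩)
    rw [pi_eq_sum_univ' (fun k => f k s), map_sum] at hs
    simpa only [map_smul, smul_eq_mul, mul_comm] using hs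
  have hzero : ∀ k, φ (Pi.single k 1) = 0 :=
    Fintype.linearIndependent_iff.1 hf _ (funext fun s => by simpa using hφ_eval s)
  exact (Submodule.mem_bot K).2 (LinearMap.pi_ext fun k c => by
    rw [← mul_one c, ← smul_eq_mul, Pi.single_smul, map_smul, hzero]; simp)

theorem exists_det_evaluation_ne_zero {f : ι → α → K} (hf : LinearIndependent K f) :
    ∃ s : ι → α, (Matrix.of fun i k => f k (s i)).det ≠ 0 := by
  set v : α → ι → K := fun s k => f k s
  obtain ⟨κ, p, -, hspan, hli⟩ := exists_linearIndependent' K v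
  rw [span_range_evaluation_eq_top hf] at hspan
  let e : κ ≃ ι := (Module.Basis.mk hli hspan.ge).indexEquiv (Pi.basisFun K ι)
  refine ⟨p ∘ e.symm, ?_⟩
  have hrows : LinearIndependent K (v ∘ p ∘ e.symm) := hli.comp e.symm e.symm.injective
  exact ((Matrix.isUnit_iff_isUnit_det _).1
    (Matrix.linearIndependent_rows_iff_isUnit.1 hrows)).ne_zero

theorem eventually_linearIndependent_of_continuousAt [TopologicalSpace K] [IsTopologicalRing K]
    [T1Space K] {X : Type*} [TopologicalSpace X] {f : ι → α → X → K} {t₀ : X}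
    (hf : ∀ k s, ContinuousAt (f k s) t₀) (h₀ : LinearIndependent K fun k s => f k s t₀) :
    ∀ᶠ t in 𝓝 t₀, LinearIndependent K fun k s => f k s t := by
  obtain ⟨s, hs⟩ := exists_det_evaluation_ne_zero h₀
  have hdet : ContinuousAt (fun t => (Matrix.of fun i k => f k (s i) t).det) t₀ :=
    continuous_id.matrix_det.continuousAt.comp
      (continuousAt_pi.2 fun i => continuousAt_pi.2 fun k => hf k (s i))
  exact (hdet.eventually_ne hs).mono fun t =>
    linearIndependent_of_det_evaluation_ne_zero (f := (f · · t))

end EvaluationMatrix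

theorem linear_independence_is_open_in_parameter_general
    (a b m : ℕ)
    (T : Set (Fin b → ℂ)) (hT : IsOpen T)
    (h : Fin m → (Fin a → ℂ) → (Fin b → ℂ) → ℂ)
    (hhol : ∀ k, DifferentiableOn ℂ
      (fun p : (Fin a → ℂ) × (Fin b → ℂ) => h k p.1 p.2) (polydisc (Fin a) ×ˢ T))
    (t₁ : Fin b → ℂ) (ht₁ : t₁ ∈ T)
    (hindep : ∀ d : Fin m → ℂ,
      (∀ s ∈ polydisc (Fin a), ∑ k, d k * h k s t₁ = 0) → ∀ k, d k = 0) :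
    ∃ T' : Set (Fin b → ℂ), T' ⊆ T ∧ IsOpen T' ∧ t₁ ∈ T' ∧
      ∀ t ∈ T', ∀ d : Fin m → ℂ,
        (∀ s ∈ polydisc (Fin a), ∑ k, d k * h k s t = 0) → ∀ k, d k = 0 := by
  have hcont : ∀ k (s : polydisc (Fin a)), ContinuousAt (h k s) t₁ := fun k s =>
    ((hhol k).continuousOn.comp (continuousOn_const.prodMk continuousOn_id)
      fun _ ht => ⟨s.2, ht⟩).continuousAt (hT.mem_nhds ht₁)
  obtain ⟨U, hU, hUo, ht₁U⟩ := eventually_nhds_iff.1 <|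
    eventually_linearIndependent_of_continuousAt hcont
      (linearIndependent_restrict_iff_sum_mul_eq_zero.2 hindep)
  exact ⟨T ∩ U, Set.inter_subset_left, hT.inter hUo, ⟨ht₁, ht₁U⟩,
    fun t ht => linearIndependent_restrict_iff_sum_mul_eq_zero.1 (hU t ht.2)⟩

/-- Let `h₁,…,h_m` be holomorphic on `Δ^a × T` with `T ⊆ ℂ^b` open,
and let `t₁ ∈ T`.  If `s ↦ h₁(s,t₁), …, s ↦ h_m(s,t₁)` are linearly independent over
`ℂ`, then the same holds for every `t` in some open neighborhood `T' ⊆ T` of `t₁`. -/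
theorem linear_independence_is_open_in_parameter
    (a b m : ℕ) (ha : 1 ≤ a) (hb : 1 ≤ b)
    (T : Set (Fin b → ℂ)) (hT : IsOpen T)
    (h : Fin m → (Fin a → ℂ) → (Fin b → ℂ) → ℂ)
    (hhol : ∀ k, DifferentiableOn ℂ
      (fun p : (Fin a → ℂ) × (Fin b → ℂ) => h k p.1 p.2) (polydisc (Fin a) ×ˢ T))
    (t₁ : Fin b → ℂ) (ht₁ : t₁ ∈ T)
    (hindep : ∀ d : Fin m → ℂ,
      (∀ s ∈ polydisc (Fin a), ∑ k, d k * h k s t₁ = 0) → ∀ k, d k = 0) :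
    ∃ T' : Set (Fin b → ℂ), T' ⊆ T ∧ IsOpen T' ∧ t₁ ∈ T' ∧
      ∀ t ∈ T', ∀ d : Fin m → ℂ,
        (∀ s ∈ polydisc (Fin a), ∑ k, d k * h k s t = 0) → ∀ k, d k = 0 :=
  linear_independence_is_open_in_parameter_general a b m T hT h hhol t₁ ht₁ hindep

end
end

section
/- Let a, b ≥ 1 be integers, let S ⊆ ℂ^a and T₁ ⊆ ℂ^b be nonempty open sets, let B ≥ 2 be an integer, and let h₁,…,h_B : S × T₁ → ℂ be holomorphic. Assume: (i) for every t ∈ T₁, the functions s ↦ h₁(s,t), …, s ↦ h_{B−1}(s,t) are linearly independent over ℂ; and (ii) there is a dense subset D ⊆ T₁ such that for every t ∈ D there exist complex numbers a_{1,t},…,a_{B−1,t} with Σ_{j=1}^{B−1} a_{j,t} h_j(s,t) = h_B(s,t) for all s ∈ S. Then there exist holomorphic functions a₁,…,a_{B−1} : T₁ → ℂ such that Σ_{j=1}^{B−1} a_j(t) h_j(s,t) = h_B(s,t) for all (s,t) ∈ S × T₁. -/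
/-!
By linear independence, for each `t` there are points `s₁, …, s_m ∈ S` at which the matrix
`(h_j(s_i, t))` is invertible; it stays invertible near `t`, where Cramer's rule turns the
values `h_B(s_i, ·)` into holomorphic coefficients. On `D` these coincide with the given
coefficients, so by continuity and density they represent `h_B` on a whole neighbourhood.
Linear independence makes the coefficients unique, so the local solutions glue.
-/

open Filter Topology Matrix

section LinearAlgebra

variable {K X ι : Type*} [Field K] [Fintype ι] [DecidableEq ι]

theorem span_image_eq_top_of_linearIndependent {v : X → ι → K} {S : Set X}
    (hv : LinearIndependent K fun k (s : S) => v s k) :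
    Submodule.span K (v '' S) = ⊤ := by
  rw [← Submodule.dualAnnihilator_eq_bot_iff, eq_bot_iff]
  intro φ hφ
  obtain ⟨d, rfl⟩ := (dotProductEquiv K ι).surjective φ
  have hd : ∑ k, d k • (fun s : S => v s k) = 0 := by
    ext s
    simpa [dotProduct, mul_comm] using
      (Submodule.mem_dualAnnihilator _).1 hφ _ (Submodule.subset_span ⟨s, s.2, rfl⟩)
  have : d = 0 := funext (Fintype.linearIndependent_iff.1 hv d hd)
  simp [this]

theorem exists_det_ne_zero_of_linearIndependent {v : X → ι → K} {S : Set X}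
    (hv : LinearIndependent K fun k (s : S) => v s k) :
    ∃ p : ι → X, (∀ i, p i ∈ S) ∧ (Matrix.of fun i => v (p i)).det ≠ 0 := by
  obtain ⟨f, hfS, -, hf⟩ := Submodule.exists_fun_fin_finrank_span_eq K (v '' S)
  have hcard : Fintype.card ι = Module.finrank K (Submodule.span K (v '' S)) := by
    rw [span_image_eq_top_of_linearIndependent hv, finrank_top,
      Module.finrank_fintype_fun_eq_card]
  let e := Fintype.equivFinOfCardEq hcard
  choose p hpS hpf using fun i => hfS (e i)
  refine ⟨p, hpS, ?_⟩
  have hrows : LinearIndependent K fun i => v (p i) := by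
    simpa only [Function.comp_def, hpf] using hf.comp e e.injective
  exact ((Matrix.isUnit_iff_isUnit_det _).1
    (Matrix.linearIndependent_rows_iff_isUnit.1 hrows)).ne_zero

end LinearAlgebra

section Calculus

variable {𝕜 F E G : Type*} [NontriviallyNormedField 𝕜] [NormedAddCommGroup F] [NormedSpace 𝕜 F]
  [NormedAddCommGroup E] [NormedSpace 𝕜 E] [NormedAddCommGroup G] [NormedSpace 𝕜 G]

theorem DifferentiableOn.uncurry_left {f : F → E → G} {S : Set F} {T : Set E} (s : F) (hs : s ∈ S)
    (hf : DifferentiableOn 𝕜 (Function.uncurry f) (S ×ˢ T)) : DifferentiableOn 𝕜 (f s) T :=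
  hf.comp ((differentiableOn_const s).prodMk differentiableOn_id) fun _ ht => ⟨hs, ht⟩

variable {ι : Type*} [Fintype ι] [DecidableEq ι] {M : E → Matrix ι ι 𝕜} {b : E → ι → 𝕜}
  {U : Set E}

theorem DifferentiableOn.matrix_det (hM : ∀ i j, DifferentiableOn 𝕜 (fun x => M x i j) U) :
    DifferentiableOn 𝕜 (fun x => (M x).det) U := by
  simp only [Matrix.det_apply']
  refine .fun_sum fun σ _ => DifferentiableOn.const_mul (fun x hx => ?_) _
  exact (HasFDerivWithinAt.finsetProd fun i _ =>
    (hM (σ i) i x hx).hasFDerivWithinAt).differentiableWithinAt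

theorem DifferentiableOn.matrix_cramer (hM : ∀ i j, DifferentiableOn 𝕜 (fun x => M x i j) U)
    (hb : ∀ i, DifferentiableOn 𝕜 (fun x => b x i) U) :
    DifferentiableOn 𝕜 (fun x => (M x).cramer (b x)) U := by
  refine differentiableOn_pi.2 fun j => ?_
  simp only [Matrix.cramer_apply]
  refine DifferentiableOn.matrix_det fun i k => ?_
  simp only [Matrix.updateCol_apply]
  split_ifs
  exacts [hb i, hM i k]

end Calculus

section LinearCombination

variable {𝕜 X E ι : Type*} [Field 𝕜] [Fintype ι] {S : Set X} {h : ι → X → E → 𝕜}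
  {g : X → E → 𝕜} {t : E} {c d : ι → 𝕜}

def IsLinearCombinationAt (S : Set X) (h : ι → X → E → 𝕜) (g : X → E → 𝕜) (t : E)
    (c : ι → 𝕜) : Prop :=
  ∀ s ∈ S, ∑ j, c j * h j s t = g s t

theorem IsLinearCombinationAt.unique (hli : LinearIndependent 𝕜 fun k (s : S) => h k s t)
    (hc : IsLinearCombinationAt S h g t c) (hd : IsLinearCombinationAt S h g t d) : c = d := by
  refine funext fun j => sub_eq_zero.1 ?_
  refine Fintype.linearIndependent_iff.1 hli (c - d) ?_ j
  ext s
  simp [sub_mul, Finset.sum_sub_distrib, hc s s.2, hd s s.2]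

theorem IsLinearCombinationAt.of_subset_closure [TopologicalSpace 𝕜] [IsTopologicalRing 𝕜]
    [T2Space 𝕜] [TopologicalSpace E] {D : Set E} {c : E → ι → 𝕜} {U : Set E} (hU : IsOpen U)
    (hUD : U ⊆ closure D) (hc : ContinuousOn c U) (hh : ∀ j, ∀ s ∈ S, ContinuousOn (h j s) U)
    (hg : ∀ s ∈ S, ContinuousOn (g s) U)
    (hD : ∀ t ∈ U ∩ D, IsLinearCombinationAt S h g t (c t)) :
    ∀ t ∈ U, IsLinearCombinationAt S h g t (c t) := by
  intro t ht s hs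
  refine Set.EqOn.of_subset_closure (fun t ht => hD t ht s hs) ?_ (hg s hs) Set.inter_subset_left
    (fun t ht => hU.inter_closure ⟨ht, hUD ht⟩) ht
  exact continuousOn_finsetSum _ fun j _ => (continuousOn_pi.1 hc j).mul (hh j s hs)

variable [DecidableEq ι]

def evalMatrix (h : ι → X → E → 𝕜) (p : ι → X) (t : E) : Matrix ι ι 𝕜 :=
  Matrix.of fun i j => h j (p i) t

def cramerCoeffs (h : ι → X → E → 𝕜) (g : X → E → 𝕜) (p : ι → X) (t : E) : ι → 𝕜 :=
  (evalMatrix h p t).det⁻¹ • (evalMatrix h p t).cramer fun i => g (p i) t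

theorem cramerCoeffs_eq {p : ι → X} (hp : ∀ i, p i ∈ S) (hdet : (evalMatrix h p t).det ≠ 0)
    (hc : IsLinearCombinationAt S h g t c) : cramerCoeffs h g p t = c := by
  have hsystem : evalMatrix h p t *ᵥ c = fun i => g (p i) t := by
    ext i
    simpa [evalMatrix, Matrix.mulVec, dotProduct, mul_comm] using hc (p i) (hp i)
  rw [cramerCoeffs, ← hsystem, Matrix.cramer_eq_adjugate_mulVec, Matrix.mulVec_mulVec,
    Matrix.adjugate_mul, Matrix.smul_mulVec, Matrix.one_mulVec, inv_smul_smul₀ hdet]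

end LinearCombination

section Coefficients

variable {𝕜 X E ι : Type*} [NontriviallyNormedField 𝕜] [NormedAddCommGroup E] [NormedSpace 𝕜 E]
  [Fintype ι] [DecidableEq ι] {S : Set X} {h : ι → X → E → 𝕜} {g : X → E → 𝕜} {T D : Set E}

theorem differentiableOn_cramerCoeffs {p : ι → X} (hp : ∀ i, p i ∈ S)
    (hh : ∀ j, ∀ s ∈ S, DifferentiableOn 𝕜 (h j s) T) (hg : ∀ s ∈ S, DifferentiableOn 𝕜 (g s) T) :
    DifferentiableOn 𝕜 (cramerCoeffs h g p) {t ∈ T | (evalMatrix h p t).det ≠ 0} := by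
  have hM : ∀ i j, DifferentiableOn 𝕜 (fun t => evalMatrix h p t i j) T :=
    fun i j => hh j (p i) (hp i)
  exact (((DifferentiableOn.matrix_det hM).mono (Set.sep_subset _ _)).inv fun t ht => ht.2).smul
    ((DifferentiableOn.matrix_cramer hM fun i => hg (p i) (hp i)).mono (Set.sep_subset _ _))

theorem exists_eventually_differentiableAt_isLinearCombinationAt (hT : IsOpen T)
    (hh : ∀ j, ∀ s ∈ S, DifferentiableOn 𝕜 (h j s) T)
    (hg : ∀ s ∈ S, DifferentiableOn 𝕜 (g s) T) (hTD : T ⊆ closure D)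
    (hsolve : ∀ t ∈ D, ∃ c, IsLinearCombinationAt S h g t c) {t₀ : E} (ht₀ : t₀ ∈ T)
    (hli : LinearIndependent 𝕜 fun k (s : S) => h k s t₀) :
    ∃ c : E → ι → 𝕜,
      ∀ᶠ t in 𝓝 t₀, DifferentiableAt 𝕜 c t ∧ IsLinearCombinationAt S h g t (c t) := by
  obtain ⟨p, hpS, hdet⟩ :=
    exists_det_ne_zero_of_linearIndependent (v := fun s j => h j s t₀) hli
  set U := {t ∈ T | (evalMatrix h p t).det ≠ 0}
  have hU : IsOpen U :=
    (DifferentiableOn.matrix_det fun i j => hh j (p i) (hpS i)).continuousOn.isOpen_inter_preimage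
      hT isOpen_ne
  have hdiff := differentiableOn_cramerCoeffs hpS hh hg
  -- At points of `D` a solution exists, and Cramer's rule recovers it from the values at `p`.
  have hsol : ∀ t ∈ U, IsLinearCombinationAt S h g t (cramerCoeffs h g p t) := by
    refine IsLinearCombinationAt.of_subset_closure hU (fun t ht => hTD ht.1) hdiff.continuousOn
      (fun j s hs => (hh j s hs).continuousOn.mono (Set.sep_subset _ _))
      (fun s hs => (hg s hs).continuousOn.mono (Set.sep_subset _ _)) ?_
    rintro t ⟨htU, htD⟩
    obtain ⟨c, hc⟩ := hsolve t htD
    rwa [cramerCoeffs_eq hpS htU.2 hc]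
  refine ⟨cramerCoeffs h g p, ?_⟩
  filter_upwards [hU.mem_nhds ⟨ht₀, hdet⟩] with t ht
  exact ⟨hdiff.differentiableAt (hU.mem_nhds ht), hsol t ht⟩

theorem exists_differentiableOn_isLinearCombinationAt (hT : IsOpen T)
    (hh : ∀ j, ∀ s ∈ S, DifferentiableOn 𝕜 (h j s) T)
    (hg : ∀ s ∈ S, DifferentiableOn 𝕜 (g s) T) (hTD : T ⊆ closure D)
    (hsolve : ∀ t ∈ D, ∃ c, IsLinearCombinationAt S h g t c)
    (hli : ∀ t ∈ T, LinearIndependent 𝕜 fun k (s : S) => h k s t) :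
    ∃ c : E → ι → 𝕜, DifferentiableOn 𝕜 c T ∧ ∀ t ∈ T, IsLinearCombinationAt S h g t (c t) := by
  have hloc := fun t ht =>
    exists_eventually_differentiableAt_isLinearCombinationAt hT hh hg hTD hsolve ht (hli t ht)
  have hex : ∀ t ∈ T, ∃ c, IsLinearCombinationAt S h g t c := fun t ht =>
    let ⟨c, hc⟩ := hloc t ht
    ⟨c t, hc.self_of_nhds.2⟩
  choose! c hc using hex
  refine ⟨c, fun t ht => ?_, hc⟩
  obtain ⟨c', hc'⟩ := hloc t ht
  have heq : c =ᶠ[𝓝 t] c' := by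
    filter_upwards [hc', hT.mem_nhds ht] with t' ht' hT'
    exact (hc t' hT').unique (hli t' hT') ht'.2
  exact (hc'.self_of_nhds.1.congr_of_eventuallyEq heq).differentiableWithinAt

end Coefficients

theorem holomorphic_coefficients_from_dense_pointwise_dependence_general
    (a b : ℕ)
    (S : Set (Fin a → ℂ)) (T₁ : Set (Fin b → ℂ))
    (hT : IsOpen T₁)
    (m : ℕ)
    (h : Fin m → (Fin a → ℂ) → (Fin b → ℂ) → ℂ)
    (hB : (Fin a → ℂ) → (Fin b → ℂ) → ℂ)
    (hhol : ∀ k, DifferentiableOn ℂ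
      (fun p : (Fin a → ℂ) × (Fin b → ℂ) => h k p.1 p.2) (S ×ˢ T₁))
    (hBhol : DifferentiableOn ℂ
      (fun p : (Fin a → ℂ) × (Fin b → ℂ) => hB p.1 p.2) (S ×ˢ T₁))
    (hindep : ∀ t ∈ T₁, ∀ d : Fin m → ℂ,
      (∀ s ∈ S, ∑ k, d k * h k s t = 0) → ∀ k, d k = 0)
    (D : Set (Fin b → ℂ)) (hDdense : T₁ ⊆ closure D)
    (hsolve : ∀ t ∈ D, ∃ av : Fin m → ℂ, ∀ s ∈ S, ∑ j, av j * h j s t = hB s t) :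
    ∃ aCoef : Fin m → (Fin b → ℂ) → ℂ,
      (∀ j, DifferentiableOn ℂ (aCoef j) T₁) ∧
      ∀ s ∈ S, ∀ t ∈ T₁, ∑ j, aCoef j t * h j s t = hB s t := by
  have hli : ∀ t ∈ T₁, LinearIndependent ℂ fun k (s : S) => h k s t := fun t ht =>
    Fintype.linearIndependent_iff.2 fun d hd =>
      hindep t ht d fun s hs => by simpa using congrFun hd ⟨s, hs⟩
  obtain ⟨c, hcdiff, hc⟩ := exists_differentiableOn_isLinearCombinationAt hT
    (fun k s hs => (hhol k).uncurry_left s hs) (fun s hs => hBhol.uncurry_left s hs) hDdense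
    hsolve hli
  exact ⟨fun j t => c t j, fun j => differentiableOn_pi.1 hcdiff j, fun s hs t ht => hc t ht s hs⟩

/-- Let `S ⊆ ℂ^a`, `T₁ ⊆ ℂ^b` be nonempty open sets and let
`h₁,…,h_{B-1}, h_B` (here `B = m + 1 ≥ 2`) be holomorphic on `S × T₁`.  Assume (i) for
every `t ∈ T₁` the functions `s ↦ h₁(s,t),…,s ↦ h_{B-1}(s,t)` are linearly independent
over `ℂ`, and (ii) on a dense subset `D ⊆ T₁` there are constants expressing
`h_B(·,t)` as a linear combination of `h₁(·,t),…,h_{B-1}(·,t)`.  Then there are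
holomorphic functions `a₁,…,a_{B-1} : T₁ → ℂ` with
`Σ_j a_j(t) h_j(s,t) = h_B(s,t)` on `S × T₁`. -/
theorem holomorphic_coefficients_from_dense_pointwise_dependence
    (a b : ℕ) (ha : 1 ≤ a) (hb : 1 ≤ b)
    (S : Set (Fin a → ℂ)) (T₁ : Set (Fin b → ℂ))
    (hS : IsOpen S) (hSne : S.Nonempty) (hT : IsOpen T₁) (hTne : T₁.Nonempty)
    (m : ℕ) (hm : 1 ≤ m)
    (h : Fin m → (Fin a → ℂ) → (Fin b → ℂ) → ℂ)
    (hB : (Fin a → ℂ) → (Fin b → ℂ) → ℂ)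
    (hhol : ∀ k, DifferentiableOn ℂ
      (fun p : (Fin a → ℂ) × (Fin b → ℂ) => h k p.1 p.2) (S ×ˢ T₁))
    (hBhol : DifferentiableOn ℂ
      (fun p : (Fin a → ℂ) × (Fin b → ℂ) => hB p.1 p.2) (S ×ˢ T₁))
    (hindep : ∀ t ∈ T₁, ∀ d : Fin m → ℂ,
      (∀ s ∈ S, ∑ k, d k * h k s t = 0) → ∀ k, d k = 0)
    (D : Set (Fin b → ℂ)) (hD : D ⊆ T₁) (hDdense : T₁ ⊆ closure D)
    (hsolve : ∀ t ∈ D, ∃ av : Fin m → ℂ, ∀ s ∈ S, ∑ j, av j * h j s t = hB s t) :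
    ∃ aCoef : Fin m → (Fin b → ℂ) → ℂ,
      (∀ j, DifferentiableOn ℂ (aCoef j) T₁) ∧
      ∀ s ∈ S, ∀ t ∈ T₁, ∑ j, aCoef j t * h j s t = hB s t :=
  holomorphic_coefficients_from_dense_pointwise_dependence_general a b S T₁ hT m h hB hhol hBhol
    hindep D hDdense hsolve
end

section
/- Let Σ := {(z₁, z₂, z₃) ∈ ℂ³ : x₃ x₁² = x₂²}, where xⱼ := Re zⱼ, be the tube over the Whitney umbrella. Let U ⊆ ℂ³ be a connected open set such that U ∩ Σ ∩ {x₁ ≠ 0} is nonempty, and let a₁, a₂, a₃ : U → ℂ be holomorphic functions satisfying a₁(z)·x₁x₃ − a₂(z)·x₂ + a₃(z)·x₁²/2 = 0 for every z ∈ U ∩ Σ with x₁ ≠ 0. Then a₁ = a₂ = a₃ = 0 identically on U. (In other words, the regular part Σ ∩ {x₁ ≠ 0} carries no nonzero tangent holomorphic vector field Σⱼ aⱼ(z) ∂/∂zⱼ, i.e. it is holomorphically nondegenerate.) -/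
/-!
A holomorphic function on a connected open set of `ℂ³` that vanishes on the part of a real slice
`{Re z = x}` lying in it vanishes identically: on each complex line in a real direction it vanishes
along an imaginary axis, so it vanishes near the slice by the one-variable identity theorem.

For `p ∈ U ∩ Σ` with `x₁ = Re p₁ ≠ 0` and `y` near `Re p₂`, the slice over the umbrella point
`(x₁, y, y² / x₁²)` meets `U`, and the tangency expression with these real coefficients frozen is
such a function. Hence for each fixed `z ∈ U` the quadratic
`a₁(z) y² / x₁ - a₂(z) y + a₃(z) x₁² / 2` vanishes on an interval of `y`, so its coefficients
vanish.
-/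

open Filter Metric Topology

theorem Complex.norm_sub_ofReal_re_le (w : ℂ) : ‖w - w.re‖ ≤ ‖w‖ := by
  calc ‖w - w.re‖ = |w.im| := by
        rw [show w - w.re = w.im * Complex.I by simp [Complex.ext_iff]]
        simp
    _ ≤ ‖w‖ := Complex.abs_im_le_norm w

theorem Complex.tendsto_ofReal_mul_I_nhdsNE :
    Tendsto (fun s : ℝ => (s * Complex.I : ℂ)) (𝓝[≠] 0) (𝓝[≠] 0) := by
  refine tendsto_nhdsWithin_of_tendsto_nhds_of_eventually_within _
    (((by fun_prop : Continuous fun s : ℝ => (s * Complex.I : ℂ)).tendsto' 0 0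
      (by simp)).mono_left nhdsWithin_le_nhds) (eventually_nhdsWithin_of_forall ?_)
  intro s hs
  simpa using hs

section IdentityPrinciple

variable {E F : Type*} [NormedAddCommGroup E] [NormedSpace ℂ E]
  [NormedAddCommGroup F] [NormedSpace ℂ F] [CompleteSpace F]

theorem DifferentiableOn.eq_zero_of_frequently_eq_zero_on_line {f : E → F} {s : Set E}
    (hs : IsOpen s) (hsc : Convex ℝ s) (hf : DifferentiableOn ℂ f s) {q v : E}
    (hq : q ∈ s) (hqv : q + v ∈ s) (hfreq : ∃ᶠ t in 𝓝[≠] (0 : ℂ), f (q + t • v) = 0) :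
    f (q + v) = 0 := by
  have hL : Differentiable ℂ fun t : ℂ => q + t • v :=
    (differentiable_id.smul_const v).const_add q
  set S : Set ℂ := (fun t : ℂ => q + t • v) ⁻¹' s
  have hconv : Convex ℝ S := (hsc.translate_preimage_right q).linear_preimage
    ((LinearMap.toSpanSingleton ℂ E v).restrictScalars ℝ)
  have hfL : DifferentiableOn ℂ (fun t : ℂ => f (q + t • v)) S :=
    hf.comp hL.differentiableOn fun _ ht => ht
  have h0 : (0 : ℂ) ∈ S := by simpa [S] using hq
  have h1 : (1 : ℂ) ∈ S := by simpa [S] using hqv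
  have hfL₁ := (hfL.analyticOnNhd (hs.preimage hL.continuous))
    |>.eqOn_zero_of_preconnected_of_frequently_eq_zero hconv.isPreconnected h0 hfreq h1
  simpa using hfL₁

theorem DifferentiableOn.eqOn_zero_of_preconnected_of_eventuallyEq_zero {f : E → F} {U : Set E}
    (hU : IsOpen U) (hUc : IsPreconnected U) (hf : DifferentiableOn ℂ f U) {p : E} (hp : p ∈ U)
    (hfp : f =ᶠ[𝓝 p] 0) : Set.EqOn f 0 U := by
  have hball {c q : E} {r : ℝ} (hcr : ball c r ⊆ U) (hq : q ∈ ball c r) (hfq : f =ᶠ[𝓝 q] 0) :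
      Set.EqOn f 0 (ball c r) := by
    intro w hw
    have hline : Tendsto (fun t : ℂ => q + t • (w - q)) (𝓝[≠] 0) (𝓝 q) :=
      tendsto_nhdsWithin_of_tendsto_nhds ((by fun_prop : Continuous _).tendsto' _ _ (by simp))
    have := (hf.mono hcr).eq_zero_of_frequently_eq_zero_on_line isOpen_ball (convex_ball c r) hq
      (v := w - q) (by simpa using hw) (hline.eventually hfq).frequently
    simpa using this
  have hsub : U ⊆ {z | f =ᶠ[𝓝 z] 0} := by
    refine hUc.subset_of_closure_inter_subset isOpen_setOfPred_eventually_nhds ⟨p, hp, hfp⟩ ?_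
    rintro z ⟨hzcl, hzU⟩
    obtain ⟨r, hr, hrU⟩ := Metric.isOpen_iff.mp hU z hzU
    obtain ⟨q, hq, hfq⟩ := mem_closure_iff_nhds.mp hzcl _ (ball_mem_nhds z hr)
    exact Filter.mem_of_superset (ball_mem_nhds z hr) (hball hrU hq hfq)
  exact fun z hz => (hsub hz).self_of_nhds

theorem DifferentiableOn.eqOn_zero_of_eq_zero_on_re_slice {f : ℂ × ℂ × ℂ → F}
    {U : Set (ℂ × ℂ × ℂ)} (hU : IsOpen U) (hUc : IsPreconnected U) (hf : DifferentiableOn ℂ f U)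
    {c : ℂ × ℂ × ℂ} (hc : c ∈ U)
    (hvan : ∀ z ∈ U, z.1.re = c.1.re → z.2.1.re = c.2.1.re → z.2.2.re = c.2.2.re → f z = 0) :
    Set.EqOn f 0 U := by
  obtain ⟨r, hr, hrU⟩ := Metric.isOpen_iff.mp hU c hc
  refine hf.eqOn_zero_of_preconnected_of_eventuallyEq_zero hU hUc hc
    (Filter.mem_of_superset (ball_mem_nhds c hr) fun z hz => ?_)
  -- `z - v` has the real parts of `c` and the imaginary parts of `z`, so the complex line
  -- through it in the real direction `v` meets the slice along its imaginary axis.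
  set d := z - c
  set v : ℂ × ℂ × ℂ := ((d.1.re : ℂ), (d.2.1.re : ℂ), (d.2.2.re : ℂ))
  have hq : z - v ∈ ball c r := by
    rw [mem_ball, dist_eq_norm, sub_right_comm]
    refine lt_of_le_of_lt ?_ (mem_ball_iff_norm.mp hz)
    simp only [Prod.norm_def, v]
    exact max_le_max (Complex.norm_sub_ofReal_re_le _)
      (max_le_max (Complex.norm_sub_ofReal_re_le _) (Complex.norm_sub_ofReal_re_le _))
  have hnear : ∀ᶠ s : ℝ in 𝓝 0, z - v + (s * Complex.I) • v ∈ ball c r :=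
    (by fun_prop : Continuous fun s : ℝ => z - v + (s * Complex.I) • v).continuousAt
      |>.preimage_mem_nhds (isOpen_ball.mem_nhds (by simpa using hq))
  have hfreq : ∃ᶠ t in 𝓝[≠] (0 : ℂ), f (z - v + t • v) = 0 := by
    refine Complex.tendsto_ofReal_mul_I_nhdsNE.frequently (Eventually.frequently ?_)
    filter_upwards [nhdsWithin_le_nhds hnear] with s hs
    exact hvan _ (hrU hs) (by simp [v, d]) (by simp [v, d]) (by simp [v, d])
  simpa using (hf.mono hrU).eq_zero_of_frequently_eq_zero_on_line isOpen_ball (convex_ball c r) hq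
    (by simpa using hz) hfreq

end IdentityPrinciple

theorem IsOpen.eventually_exists_mem_re_eq {U : Set (ℂ × ℂ × ℂ)} (hU : IsOpen U)
    {p : ℂ × ℂ × ℂ} (hp : p ∈ U) {g : ℝ → ℝ} (hg : Continuous g) (hgp : g p.2.1.re = p.2.2.re) :
    ∀ᶠ y in 𝓝 p.2.1.re, ∃ c ∈ U, c.1.re = p.1.re ∧ c.2.1.re = y ∧ c.2.2.re = g y := by
  set γ : ℝ → ℂ × ℂ × ℂ := fun y => (p.1, y + p.2.1.im * Complex.I, g y + p.2.2.im * Complex.I)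
  have hγp : γ p.2.1.re = p := by ext <;> simp [γ, hgp]
  filter_upwards [(by fun_prop : Continuous γ).continuousAt.preimage_mem_nhds
    (hU.mem_nhds (by rwa [hγp]))] with y hy
  exact ⟨γ y, hy, rfl, by simp [γ], by simp [γ]⟩

open Polynomial in
theorem eq_zero_of_eventually_quadratic_eq_zero {a b c : ℂ} {y₀ : ℝ}
    (h : ∀ᶠ y : ℝ in 𝓝 y₀, a * y ^ 2 + b * y + c = 0) : a = 0 ∧ b = 0 ∧ c = 0 := by
  set P : ℂ[X] := C a * X ^ 2 + C b * X + C c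
  have hP : P = 0 := by
    refine P.eq_zero_of_infinite_isRoot (((infinite_of_mem_nhds y₀ h).image
      Complex.ofReal_injective.injOn).mono ?_)
    rintro _ ⟨y, hy, rfl⟩
    simpa [P] using hy
  refine ⟨?_, ?_, ?_⟩
  · simpa [P] using congrArg (coeff · 2) hP
  · simpa [P] using congrArg (coeff · 1) hP
  · simpa [P] using congrArg (coeff · 0) hP

/-- Let `Σ = {z ∈ ℂ³ : (Re z₃)(Re z₁)² = (Re z₂)²}` be the tube over
the Whitney umbrella.  If `U ⊆ ℂ³` is a connected open set meeting
`Σ ∩ {Re z₁ ≠ 0}` and `a₁, a₂, a₃` are holomorphic on `U` with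
`a₁(z)·x₁x₃ − a₂(z)·x₂ + a₃(z)·x₁²/2 = 0` (where `xⱼ = Re zⱼ`) at every point of
`U ∩ Σ` with `x₁ ≠ 0`, then `a₁ = a₂ = a₃ = 0` on `U`: the regular part of the tube is
holomorphically nondegenerate. -/
theorem tube_over_whitney_umbrella_holomorphically_nondegenerate
    (U : Set (ℂ × ℂ × ℂ)) (hUopen : IsOpen U) (hUconn : IsConnected U)
    (a₁ a₂ a₃ : ℂ × ℂ × ℂ → ℂ)
    (ha₁ : DifferentiableOn ℂ a₁ U) (ha₂ : DifferentiableOn ℂ a₂ U)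
    (ha₃ : DifferentiableOn ℂ a₃ U)
    (hmeet : ∃ z ∈ U, z.2.2.re * z.1.re ^ 2 = z.2.1.re ^ 2 ∧ z.1.re ≠ 0)
    (htang : ∀ z ∈ U, z.2.2.re * z.1.re ^ 2 = z.2.1.re ^ 2 → z.1.re ≠ 0 →
      a₁ z * ((z.1.re : ℂ) * (z.2.2.re : ℂ)) - a₂ z * (z.2.1.re : ℂ)
        + a₃ z * ((z.1.re : ℂ) ^ 2 / 2) = 0) :
    ∀ z ∈ U, a₁ z = 0 ∧ a₂ z = 0 ∧ a₃ z = 0 := by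
  obtain ⟨p, hpU, hpS, hp₁⟩ := hmeet
  have hcenter := hUopen.eventually_exists_mem_re_eq hpU (g := fun y => y ^ 2 / p.1.re ^ 2)
    (by fun_prop) (by field_simp; linarith)
  have hcoeff : ∀ᶠ y : ℝ in 𝓝 p.2.1.re,
      ∀ z ∈ U, a₁ z * p.1.re / p.1.re ^ 2 * y ^ 2 + -a₂ z * y + a₃ z * (p.1.re ^ 2 / 2) = 0 := by
    filter_upwards [hcenter] with y ⟨c, hcU, hc₁, hc₂, hc₃⟩ z hz
    have hf : DifferentiableOn ℂ (fun z => a₁ z * ((p.1.re : ℂ) * ↑(y ^ 2 / p.1.re ^ 2))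
        - a₂ z * y + a₃ z * ((p.1.re : ℂ) ^ 2 / 2)) U := by fun_prop
    have hslice := hf.eqOn_zero_of_eq_zero_on_re_slice hUopen hUconn.isPreconnected hcU ?_ hz
    · push_cast [Pi.zero_apply] at hslice
      linear_combination hslice
    · intro w hw h₁ h₂ h₃
      rw [hc₁] at h₁; rw [hc₂] at h₂; rw [hc₃] at h₃
      have := htang w hw (by rw [h₁, h₂, h₃]; field_simp) (h₁ ▸ hp₁)
      rwa [h₁, h₂, h₃] at this
  intro z hz
  obtain ⟨h₁, h₂, h₃⟩ := eq_zero_of_eventually_quadratic_eq_zero (hcoeff.mono fun y hy => hy z hz)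
  have hx₁ : (p.1.re : ℂ) ≠ 0 := by exact_mod_cast hp₁
  exact ⟨by simpa [hx₁] using h₁, by simpa using h₂, by simpa [hx₁] using h₃⟩
end
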